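/- arXiv:2505.01216 — 7 statements merged into one kernel-verified Lean document; each statement's English description precedes it below -/
import Mathlib

section
/- Let k be a field and let d ≥ 4 be an integer with char(k) ∤ 2d. Suppose α, β, γ ∈ k with α ≠ 0 satisfy the polynomial identity α·(X² + βX + 1)^d − X^{2d} − 1 = (α − 1)·(X² + γX + 1)^d in k[X] (equivalently, α(t + β + t⁻¹)^d − t^d − t^{−d} = (α−1)(t + γ + t⁻¹)^d in k[t, t⁻¹]). Then the characteristic of k is an odd prime p, there exists m ≥ 1 with 2d = p^m + 1, and moreover α = 1/2, γ = −β, and β² = 4. -/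
/-!
Write `P = X² + βX + 1`, `Q = X² + γX + 1`. The operator `G ↦ P G' - d P' G` kills
`P^d`, so applying it to the identity eliminates `α`:
`(1 - α)(β - γ)(X² - 1) Q^(d-1) = βX^(2d) + 2X^(2d-1) - 2X - β`.
Hence `U = (1 - α)(β - γ) Q^(d-1)` has coefficients `β, 2, β, 2, …`, while `Q U' = (d-1) Q' U`;
comparing this differential equation in degrees `2, …, 5` gives `γ = -β` and `βγ = -4`, and
the constant term then gives `α = 1/2`. Thus `Q = (X - ε)²` with `ε = β/2 = ±1`, and the
identity collapses to `(X - ε)^(2d-1) = X^(2d-1) - ε`. Its linear coefficient shows that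
`p = char k` divides `2d - 1`; writing `2d - 1 = p^a s` with `p ∤ s`, Frobenius reduces it to
`(X + b)^s = X^s + b^s`, whose linear coefficient `s b^(s-1)` forces `s = 1`.
-/

open Polynomial

section CommRing
variable {R : Type*} [CommRing R]

theorem mul_derivative_sub_eq_of_C_mul_pow_sub_eq {P Q F : R[X]} {a : R} {n : ℕ}
    (h : C a * P ^ n - F = C (a - 1) * Q ^ n) :
    P * derivative F - C (n : R) * derivative P * F =
      C ((1 - a) * n) * Q ^ (n - 1) * wronskian P Q := by
  obtain rfl : F = C a * P ^ n - C (a - 1) * Q ^ n := by linear_combination -h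
  cases n with
  | zero => simp [wronskian]
  | succ n =>
    simp only [derivative_mul, derivative_C, derivative_one, derivative_pow_succ,
      wronskian, map_mul, map_sub, map_one, Nat.add_sub_cancel]
    push_cast
    ring

theorem mul_derivative_C_mul_pow (c : R) (Q : R[X]) (n : ℕ) :
    Q * derivative (C c * Q ^ n) = C (n : R) * derivative Q * (C c * Q ^ n) := by
  cases n with
  | zero => simp
  | succ n =>
    rw [derivative_C_mul, derivative_pow_succ]
    push_cast
    ring

theorem coeff_add_two_of_mul_derivative_eq {U : R[X]} {γ r : R}
    (h : (X ^ 2 + C γ * X + 1) * derivative U = C r * derivative (X ^ 2 + C γ * X + 1) * U)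
    (j : ℕ) :
    (j + 1) * U.coeff (j + 1) + γ * ((j + 2) * U.coeff (j + 2)) + (j + 3) * U.coeff (j + 3) =
      r * (2 * U.coeff (j + 1) + γ * U.coeff (j + 2)) := by
  have hj := congrArg (coeff · (j + 2)) h
  simp only [derivative_add, derivative_X_pow, derivative_C_mul_X, derivative_one, add_zero,
    Nat.cast_ofNat, Nat.add_one_sub_one, pow_one, map_ofNat] at hj
  simp only [add_mul, mul_assoc, coeff_add, coeff_C_mul, coeff_X_pow_mul', coeff_X_mul,
    one_mul, coeff_derivative, coeff_ofNat_mul, if_pos (Nat.le_add_left 2 j),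
    Nat.add_sub_cancel] at hj
  push_cast at hj
  linear_combination hj

theorem coeff_eq_of_X_sq_sub_one_mul_eq {U : R[X]} {β : R} {m : ℕ}
    (h : (X ^ 2 - 1) * U = C β * X ^ (2 * m + 2) + 2 * X ^ (2 * m + 1) - 2 * X - C β)
    {j : ℕ} (hj : j ≤ 2 * m) : U.coeff j = if Even j then β else 2 := by
  have hc (i : ℕ) : ((X ^ 2 - 1) * U).coeff i =
      (if 2 ≤ i then U.coeff (i - 2) else 0) - U.coeff i := by
    simp [sub_mul, coeff_X_pow_mul']
  induction j using Nat.twoStepInduction with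
  | zero => simpa [h, coeff_X, coeff_C] using (hc 0).symm
  | one =>
    have h1 := hc 1
    simp only [h, coeff_sub, coeff_add, coeff_C_mul, coeff_ofNat_mul, coeff_X_pow, coeff_X,
      coeff_C, if_neg (show 1 ≠ 2 * m + 2 by omega), if_neg (show 1 ≠ 2 * m + 1 by omega)] at h1
    simpa using h1.symm
  | more j ih _ =>
    have hj2 : U.coeff (j + 2) = U.coeff j := by
      have := hc (j + 2)
      simp only [h, coeff_sub, coeff_add, coeff_C_mul, coeff_ofNat_mul, coeff_X_pow, coeff_X,
        coeff_C, if_neg (show j + 2 ≠ 2 * m + 2 by omega),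
        if_neg (show j + 2 ≠ 2 * m + 1 by omega), if_neg (show 1 ≠ j + 2 by omega),
        if_neg (show j + 2 ≠ 0 by omega), if_pos (show 2 ≤ j + 2 by omega),
        Nat.add_sub_cancel] at this
      linear_combination this
    rw [hj2, ih (by omega)]
    simp [Nat.even_add]

end CommRing

section Domain
variable {R : Type*} [CommRing R] [IsDomain R]

theorem eq_neg_and_mul_eq_neg_four {U : R[X]} {β γ r : R} (h2 : (2 : R) ≠ 0)
    (hrec : (X ^ 2 + C γ * X + 1) * derivative U = C r * derivative (X ^ 2 + C γ * X + 1) * U)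
    (hU : ∀ j ≤ 6, U.coeff j = if Even j then β else 2) :
    γ = -β ∧ β * γ = -4 := by
  have e := coeff_add_two_of_mul_derivative_eq hrec
  have e0 := e 0
  have e1 := e 1
  have e2 := e 2
  have e3 := e 3
  norm_num [hU] at e0 e1 e2 e3
  have hsum : 2 * (2 * (β + γ)) = 0 := by linear_combination e3 - e1
  have hprod : 2 * (β * γ + 4) = 0 := by linear_combination e2 - e0
  constructor
  · linear_combination (mul_eq_zero.mp ((mul_eq_zero.mp hsum).resolve_left h2)).resolve_left h2
  · linear_combination (mul_eq_zero.mp hprod).resolve_left h2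

theorem natCast_eq_zero_of_X_add_C_pow_eq {a : R} (ha : a ≠ 0) {n : ℕ} (hn : 2 ≤ n)
    (h : (X + C a) ^ n = X ^ n + C (a ^ n)) : (n : R) = 0 := by
  have h1 := congrArg (coeff · 1) h
  simp only [coeff_X_add_C_pow, Nat.choose_one_right, coeff_add, coeff_X_pow, coeff_C,
    if_neg (show 1 ≠ n by omega), one_ne_zero, if_false, add_zero] at h1
  exact (mul_eq_zero.mp h1).resolve_left (pow_ne_zero _ ha)

theorem exists_eq_pow_of_X_add_C_pow_eq (p : ℕ) [hp : Fact p.Prime] [CharP R p] {a : R}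
    (ha : a ≠ 0) {n : ℕ} (hn : n ≠ 0) (h : (X + C a) ^ n = X ^ n + C (a ^ n)) :
    ∃ m, n = p ^ m := by
  obtain ⟨m, s, hps, rfl⟩ := Nat.exists_eq_pow_mul_and_not_dvd hn p hp.out.ne_one
  refine ⟨m, ?_⟩
  have hs : (X + C (a ^ p ^ m)) ^ s = X ^ s + C ((a ^ p ^ m) ^ s) := by
    apply expand_injective (pow_pos hp.out.pos m)
    rw [pow_mul, pow_mul, pow_mul, add_pow_char_pow] at h
    simpa only [map_pow, map_add, expand_X, expand_C] using h
  suffices s = 1 by rw [this, mul_one]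
  by_contra hs1
  have hs2 : 2 ≤ s := by have := right_ne_zero_of_mul hn; omega
  exact hps ((CharP.cast_eq_zero_iff R p s).mp
    (natCast_eq_zero_of_X_add_C_pow_eq (pow_ne_zero _ ha) hs2 hs))

end Domain

section Field
variable {k : Type*} [Field k]

theorem X_sq_sub_one_mul_eq_of_C_mul_pow_sub_eq {α β γ : k} {n : ℕ}
    (hn : ((n + 1 : ℕ) : k) ≠ 0)
    (h : C α * (X ^ 2 + C β * X + 1) ^ (n + 1) - X ^ (2 * (n + 1)) - 1 =
      C (α - 1) * (X ^ 2 + C γ * X + 1) ^ (n + 1)) :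
    (X ^ 2 - 1) * (C ((1 - α) * (β - γ)) * (X ^ 2 + C γ * X + 1) ^ n) =
      C β * X ^ (2 * n + 2) + 2 * X ^ (2 * n + 1) - 2 * X - C β := by
  rw [sub_sub, show 2 * (n + 1) = 2 * n + 1 + 1 by ring] at h
  have hW := mul_derivative_sub_eq_of_C_mul_pow_sub_eq h
  simp only [wronskian, derivative_add, derivative_mul, derivative_X_pow, derivative_C,
    derivative_X, derivative_one, Nat.add_sub_cancel] at hW
  push_cast at hW
  have hC : C ((n + 1 : ℕ) : k) ≠ 0 := C_ne_zero.mpr hn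
  refine (mul_right_inj' hC).mp ?_
  simp only [map_add, map_mul, map_sub, map_one, map_ofNat, map_natCast, Nat.cast_add,
    Nat.cast_one] at hW ⊢
  linear_combination -hW

theorem X_add_C_pow_eq_of_sq_eq_four {β : k} (h2 : (2 : k) ≠ 0) (hβ : β ^ 2 = 4) {n : ℕ}
    (h : (X ^ 2 - 1) * (C β * (X ^ 2 + C (-β) * X + 1) ^ n) =
      C β * X ^ (2 * n + 2) + 2 * X ^ (2 * n + 1) - 2 * X - C β) :
    (X + C (-(β / 2))) ^ (2 * n + 1) = X ^ (2 * n + 1) + C ((-(β / 2)) ^ (2 * n + 1)) := by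
  obtain ⟨a, rfl⟩ : ∃ a, β = -2 * a := ⟨-(β / 2), by field_simp⟩
  rw [show -(-2 * a / 2) = a by field_simp]
  have ha2 : a ^ 2 = 1 := by
    have h4 : 2 * 2 * (a ^ 2 - 1) = 0 := by linear_combination hβ
    linear_combination (mul_eq_zero.mp h4).resolve_left (mul_ne_zero h2 h2)
  have ha : a ≠ 0 := fun h0 => by simp [h0] at ha2
  have hCa : C a ^ 2 = 1 := by rw [← map_pow, ha2, map_one]
  have hQ : X ^ 2 + C (-(-2 * a)) * X + 1 = (X + C a) ^ 2 := by
    simp only [map_neg, map_mul, map_ofNat]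
    linear_combination -hCa
  rw [hQ, ← pow_mul] at h
  rw [show a ^ (2 * n + 1) = a by rw [pow_succ, pow_mul, ha2, one_pow, one_mul]]
  have hfactor : C (-2 * a) * (X - C a) *
      ((X + C a) ^ (2 * n + 1) - (X ^ (2 * n + 1) + C a)) = 0 := by
    simp only [map_neg, map_mul, map_ofNat] at h ⊢
    linear_combination
      h - (-2 * C a * (X + C a) ^ (2 * n) + 2 * X ^ (2 * n + 1) - 2 * X + 2 * C a) * hCa
  have hne : C (-2 * a) * (X - C a) ≠ 0 :=
    mul_ne_zero (C_ne_zero.mpr (mul_ne_zero (neg_ne_zero.mpr h2) ha)) (X_sub_C_ne_zero a)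
  exact sub_eq_zero.mp ((mul_eq_zero.mp hfactor).resolve_left hne)

theorem exists_ringChar_pow_eq_of_X_add_C_pow_eq {a : k} (ha : a ≠ 0) {n : ℕ} (hn : 2 ≤ n)
    (h : (X + C a) ^ n = X ^ n + C (a ^ n)) :
    (ringChar k).Prime ∧ ∃ m, 1 ≤ m ∧ n = ringChar k ^ m := by
  have hdvd : ringChar k ∣ n := ringChar.dvd (natCast_eq_zero_of_X_add_C_pow_eq ha hn h)
  have hp : (ringChar k).Prime :=
    CharP.char_prime_of_ne_zero k fun h0 => by rw [h0, zero_dvd_iff] at hdvd; omega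
  have := Fact.mk hp
  obtain ⟨m, hm⟩ := exists_eq_pow_of_X_add_C_pow_eq (ringChar k) ha (by omega) h
  refine ⟨hp, m, Nat.pos_of_ne_zero ?_, hm⟩
  rintro rfl
  rw [pow_zero] at hm
  omega

end Field

theorem stmt0_general {k : Type*} [Field k] (d : ℕ) (hd : 4 ≤ d)
    (hchar : ¬ (ringChar k ∣ 2 * d)) (α β γ : k)
    (h : C α * (X ^ 2 + C β * X + 1) ^ d - X ^ (2 * d) - 1
        = C (α - 1) * (X ^ 2 + C γ * X + 1) ^ d) :
    (∃ (p m : ℕ), p.Prime ∧ Odd p ∧ ringChar k = p ∧ 1 ≤ m ∧ 2 * d = p ^ m + 1)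
      ∧ α = 1 / 2 ∧ γ = -β ∧ β ^ 2 = 4 := by
  obtain ⟨n, rfl⟩ : ∃ n, d = n + 1 := ⟨d - 1, by omega⟩
  have h2 : (2 : k) ≠ 0 := fun h0 =>
    hchar (dvd_mul_of_dvd_left (ringChar.dvd (by exact_mod_cast h0)) _)
  have hd0 : ((n + 1 : ℕ) : k) ≠ 0 := fun h0 =>
    hchar (dvd_mul_of_dvd_right (ringChar.dvd h0) _)
  have hS := X_sq_sub_one_mul_eq_of_C_mul_pow_sub_eq hd0 h
  have hU (j : ℕ) (hj : j ≤ 6) := coeff_eq_of_X_sq_sub_one_mul_eq hS (j := j) (by omega)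
  obtain ⟨hγ, hβγ⟩ := eq_neg_and_mul_eq_neg_four h2 (mul_derivative_C_mul_pow _ _ n) hU
  have hβ2 : β ^ 2 = 4 := by linear_combination β * hγ - hβγ
  have hc : (1 - α) * (β - γ) = β := by
    simpa [coeff_zero_eq_eval_zero] using hU 0 (by omega)
  have hβ0 : β ≠ 0 := fun h0 =>
    h2 (mul_self_eq_zero.mp (by linear_combination -hβ2 + β * h0))
  have hα : α = 1 / 2 := by
    have : β * (1 - 2 * α) = 0 := by linear_combination hc + (1 - α) * hγ
    field_simp
    linear_combination -(mul_eq_zero.mp this).resolve_left hβ0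
  rw [hc, hγ] at hS
  obtain ⟨hp, m, hm, hnm⟩ := exists_ringChar_pow_eq_of_X_add_C_pow_eq (a := -(β / 2))
    (neg_ne_zero.mpr (div_ne_zero hβ0 h2)) (by omega) (X_add_C_pow_eq_of_sq_eq_four h2 hβ2 hS)
  have hodd : Odd (ringChar k) :=
    (odd_two_mul_add_one n).of_dvd_nat (hnm ▸ dvd_pow_self _ (by omega))
  exact ⟨⟨_, m, hp, hodd, rfl, hm, by omega⟩, hα, hγ, hβ2⟩

/-- classification of nontrivial solutions of
`α (X² + βX + 1)^d - X^{2d} - 1 = (α-1)(X² + γX + 1)^d` in `k[X]`,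
for `d ≥ 4` and `char k ∤ 2d`.  Such a solution forces `char k = p` an odd
prime with `2d = p^m + 1`, and `α = 1/2`, `γ = -β`, `β² = 4`. -/
theorem stmt0 {k : Type*} [Field k] (d : ℕ) (hd : 4 ≤ d)
    (hchar : ¬ (ringChar k ∣ 2 * d)) (α β γ : k) (hα : α ≠ 0)
    (h : C α * (X ^ 2 + C β * X + 1) ^ d - X ^ (2 * d) - 1
        = C (α - 1) * (X ^ 2 + C γ * X + 1) ^ d) :
    (∃ (p m : ℕ), p.Prime ∧ Odd p ∧ ringChar k = p ∧ 1 ≤ m ∧ 2 * d = p ^ m + 1)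
      ∧ α = 1 / 2 ∧ γ = -β ∧ β ^ 2 = 4 :=
  stmt0_general d hd hchar α β γ h
end

section
/- Let p be an odd prime, q a power of p, and d = (q+1)/2. Then in the polynomial ring k[X] over any field k of characteristic p, the identity 2·φ_d(X) = (X + 2)^d + (X − 2)^d holds, where φ_d is the d-th Chebyshev polynomial. -/
/-!
Write `X = s² + s⁻²`. Then `X ± 2 = (s ± s⁻¹)²`, so with `2d = q + 1` the right-hand side is
`(s + s⁻¹)^(q+1) + (s - s⁻¹)^(q+1)`. Since `q` is a power of the characteristic, Frobenius makes
`(a ± b)^(q+1) = (a^q ± b^q)(a ± b)`, and the cross terms cancel in the sum, leaving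
`2 (s^(q+1) + s^-(q+1)) = 2 φ_d(s² + s⁻²)`. Over an algebraically closed field every point is of the
form `s² + s⁻²`, which pins down the polynomial identity.
-/

open Polynomial

theorem add_pow_add_sub_pow_expChar_pow_succ {R : Type*} [CommRing R] (p r : ℕ) [ExpChar R p]
    (a b : R) :
    (a + b) ^ (p ^ r + 1) + (a - b) ^ (p ^ r + 1) = 2 * (a ^ (p ^ r + 1) + b ^ (p ^ r + 1)) := by
  rw [pow_succ, add_pow_expChar_pow, pow_succ, sub_pow_expChar_pow]
  ring

theorem two_mul_dickson_one_one_eval_sq_add_sq {R : Type*} [CommRing R] (p r d : ℕ) [ExpChar R p]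
    (hd : 2 * d = p ^ r + 1) (s u : R) (hsu : s * u = 1) :
    2 * (dickson 1 1 d).eval (s ^ 2 + u ^ 2) = (s ^ 2 + u ^ 2 + 2) ^ d + (s ^ 2 + u ^ 2 - 2) ^ d := by
  have hsq : s ^ 2 * u ^ 2 = 1 := by rw [← mul_pow, hsu, one_pow]
  have hadd : s ^ 2 + u ^ 2 + 2 = (s + u) ^ 2 := by linear_combination -2 * hsu
  have hsub : s ^ 2 + u ^ 2 - 2 = (s - u) ^ 2 := by linear_combination 2 * hsu
  rw [dickson_one_one_eval_add_inv _ _ hsq, hadd, hsub, ← pow_mul, ← pow_mul, ← pow_mul, ← pow_mul,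
    hd, add_pow_add_sub_pow_expChar_pow_succ]

theorem IsAlgClosed.exists_sq_add_inv_sq_eq {K : Type*} [Field K] [IsAlgClosed K] (z : K) :
    ∃ s : K, s * s⁻¹ = 1 ∧ s ^ 2 + s⁻¹ ^ 2 = z := by
  have hdeg : (X ^ 4 - C z * X ^ 2 + 1).degree = 4 := by compute_degree!
  obtain ⟨s, hs⟩ := IsAlgClosed.exists_root _ (by rw [hdeg]; decide)
  simp only [IsRoot, eval_add, eval_sub, eval_mul, eval_pow, eval_C, eval_X, eval_one] at hs
  have hs0 : s ≠ 0 := by rintro rfl; norm_num at hs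
  refine ⟨s, mul_inv_cancel₀ hs0, ?_⟩
  field_simp
  linear_combination hs

theorem stmt1_general (p r q d : ℕ) (hp : p.Prime)
    (hq : q = p ^ r) (hd : 2 * d = q + 1)
    (k : Type*) [Field k] [CharP k p] :
    (2 : k[X]) * dickson 1 1 d = (X + 2) ^ d + (X - 2) ^ d := by
  let K := AlgebraicClosure k
  have : ExpChar K p := ExpChar.prime hp
  apply map_injective (algebraMap k K) (algebraMap k K).injective
  simp only [Polynomial.map_mul, Polynomial.map_add, Polynomial.map_pow, Polynomial.map_sub,
    map_X, Polynomial.map_ofNat, map_dickson, map_one]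
  refine Polynomial.funext fun z => ?_
  obtain ⟨s, hs, rfl⟩ := IsAlgClosed.exists_sq_add_inv_sq_eq z
  simpa only [eval_mul, eval_add, eval_sub, eval_pow, eval_X, eval_ofNat] using
    two_mul_dickson_one_one_eval_sq_add_sq p r d (hq ▸ hd) s s⁻¹ hs

/-- For `p` an odd prime, `q` a power of `p` and `d = (q+1)/2`,
in `k[X]` over any field `k` of characteristic `p` one has
`2 φ_d(X) = (X + 2)^d + (X - 2)^d`, where `φ_d = dickson 1 1 d` is the
`d`-th Chebyshev polynomial. -/
theorem stmt1 (p r q d : ℕ) (hp : p.Prime) (hodd : Odd p) (hr : 1 ≤ r)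
    (hq : q = p ^ r) (hd : 2 * d = q + 1)
    (k : Type*) [Field k] [CharP k p] :
    (2 : k[X]) * dickson 1 1 d = (X + 2) ^ d + (X - 2) ^ d :=
  stmt1_general p r q d hp hq hd k
end

section
/- Let k be a field and d ≥ 4 an integer with char(k) ∤ 2d. Assume that either d is even, or d is odd and char(k) does not divide d − 1. Suppose a, b ∈ k satisfy the identity φ_d(X) = (aX + b)^d · φ_d(X/(aX + b)) in the field of rational functions k(X) (where φ_d(X/(aX+b)) denotes Polynomial.aeval of φ_d at the rational function X/(aX+b), and (aX+b) is not the zero rational function). Then a = 0 and b = 1 or b = −1. -/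
open Polynomial

private lemma dick_monic : ∀ n : ℕ,
    (dickson 1 (1:ℤ) (n+1)).Monic ∧ (dickson 1 (1:ℤ) (n+1)).natDegree = n+1
  | 0 => ⟨by simpa using monic_X, by simp⟩
  | 1 => by
      have h2 : dickson 1 (1:ℤ) 2 = X ^ 2 - C 2 := by
        rw [dickson_two]; norm_num
      refine ⟨?_, ?_⟩
      · rw [h2]; exact monic_X_pow_sub_C 2 two_ne_zero
      · rw [h2, natDegree_X_pow_sub_C]
  | (n+2) => by
      obtain ⟨h1m, h1d⟩ := dick_monic n
      obtain ⟨h2m, h2d⟩ := dick_monic (n+1)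
      have hXm : (X * dickson 1 (1:ℤ) (n+2)).Monic := monic_X.mul h2m
      have hXd : (X * dickson 1 (1:ℤ) (n+2)).natDegree = n+3 := by
        rw [natDegree_mul X_ne_zero h2m.ne_zero, natDegree_X, h2d]; omega
      have hlt : (C 1 * dickson 1 (1:ℤ) (n+1)).degree < (X * dickson 1 (1:ℤ) (n+2)).degree := by
        rw [C_1, one_mul]
        rw [degree_eq_natDegree h1m.ne_zero, degree_eq_natDegree hXm.ne_zero, h1d, hXd]
        exact_mod_cast by omega
      refine ⟨?_, ?_⟩
      · rw [dickson_add_two]; exact hXm.sub_of_left hlt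
      · rw [dickson_add_two, natDegree_sub_eq_left_of_natDegree_lt, hXd]
        rw [hXd, C_1, one_mul, h1d]; omega

private lemma dick_c0 : ∀ n : ℕ,
    (dickson 1 (1:ℤ) (2*n)).coeff 0 = 2 * (-1)^n ∧ (dickson 1 (1:ℤ) (2*n+1)).coeff 0 = 0
  | 0 => by norm_num [dickson_zero, dickson_one]
  | (n+1) => by
      obtain ⟨h0, h1⟩ := dick_c0 n
      have e2 : 2*(n+1) = (2*n) + 2 := by ring
      have e3 : 2*(n+1)+1 = (2*n+1) + 2 := by ring
      constructor
      · rw [e2, dickson_add_two, coeff_sub, mul_coeff_zero, coeff_X_zero, coeff_C_mul, h0]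
        ring
      · rw [e3, dickson_add_two, coeff_sub, mul_coeff_zero, coeff_X_zero, coeff_C_mul, h1]
        ring

private lemma dick_c1 : ∀ n : ℕ,
    (dickson 1 (1:ℤ) (2*n)).coeff 1 = 0 ∧
      (dickson 1 (1:ℤ) (2*n+1)).coeff 1 = (-1)^n * (2*n+1) := by
  intro n
  induction n with
  | zero => norm_num [dickson_zero, dickson_one]
  | succ n ih =>
      obtain ⟨h0, h1⟩ := ih
      have key : ∀ m : ℕ, (dickson 1 (1:ℤ) (m+2)).coeff 1
          = (dickson 1 (1:ℤ) (m+1)).coeff 0 - (dickson 1 (1:ℤ) m).coeff 1 := by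
        intro m
        rw [dickson_add_two, coeff_sub, coeff_C_mul, one_mul]
        rw [show (1:ℕ) = 0 + 1 from rfl, coeff_X_mul]
      constructor
      · rw [show 2*(n+1) = (2*n)+2 by ring, key, (dick_c0 n).2, h0]; ring
      · rw [show 2*(n+1)+1 = (2*n+1)+2 by ring, key,
          show 2*n+1+1 = 2*(n+1) by ring, (dick_c0 (n+1)).1, h1]
        push_cast; ring

private lemma dick_c2 : ∀ n : ℕ, (dickson 1 (1:ℤ) (2*n+1)).coeff 2 = 0 := by
  intro n
  induction n with
  | zero => show (X : ℤ[X]).coeff 2 = 0; simp [coeff_X]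
  | succ n ih =>
      rw [show 2*(n+1)+1 = (2*n+1)+2 by ring, dickson_add_two, coeff_sub, coeff_C_mul, one_mul]
      rw [show (2:ℕ) = 1 + 1 from rfl, coeff_X_mul]
      rw [show 2*n+1+1 = 2*(n+1) by ring, (dick_c1 (n+1)).1, ih]
      ring

private lemma dick_cA : ∀ n : ℕ, (dickson 1 (1:ℤ) (n+2)).coeff n = -((n:ℤ)+2) := by
  intro n
  induction n with
  | zero =>
      have h2 : dickson 1 (1:ℤ) 2 = X ^ 2 - C 2 := by rw [dickson_two]; norm_num
      rw [h2]; simp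
  | succ n ih =>
      rw [show n+1+2 = (n+1)+2 from rfl, dickson_add_two, coeff_sub, coeff_C_mul, one_mul]
      rw [show n+1 = n+1 from rfl, coeff_X_mul, ih]
      have h := dick_monic n
      have hcoe : (dickson 1 (1:ℤ) (n+1)).coeff (n+1) = 1 := by
        have := h.1.coeff_natDegree
        rwa [h.2] at this
      rw [hcoe]; push_cast; ring

private lemma linpow {k : Type*} [Field k] (a b : k) (m l : ℕ) :
    ((C a * X + C b)^m).coeff l = a^l * b^(m-l) * (m.choose l) := by
  have hexp : (C a * X + C b)^m
      = ∑ t ∈ Finset.range (m+1), C (a^t * b^(m-t) * (m.choose t)) * X^t := by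
    rw [add_pow]
    refine Finset.sum_congr rfl fun t ht => ?_
    rw [mul_pow, ← C_pow, ← C_pow]
    rw [← C_eq_natCast]
    simp only [C_mul]
    ring
  rw [hexp, finset_sum_coeff]
  simp only [coeff_C_mul, coeff_X_pow, mul_ite, mul_one, mul_zero]
  rw [Finset.sum_ite_eq (Finset.range (m+1)) l]
  split_ifs with hl
  · rfl
  · rw [Nat.choose_eq_zero_of_lt (by simpa using hl)]
    simp

/-- Proposition 3.6: let `char k ∤ 2d`, `d ≥ 4`, and assume `d` is
even, or `d` is odd and `char k ∤ (d-1)`.  If `a, b ∈ k` satisfy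
`φ_d(X) = (aX + b)^d · φ_d(X/(aX + b))` in `k(X)`, then `a = 0` and `b = ±1`.
(Equivalently: the only automorphisms of `y^d = φ_d(x)` of the form
`(x,y) ↦ (x/(ax+b), y/(ax+b))` are the identity and `(x,y) ↦ (-x, ±y)`.) -/
theorem stmt9 (k : Type*) [Field k] (d : ℕ) (hd : 4 ≤ d)
    (hchar : ¬ (ringChar k ∣ 2 * d))
    (hpar : Even d ∨ (Odd d ∧ ¬ (ringChar k ∣ (d - 1))))
    (a b : k)
    (hden : (RatFunc.C a * RatFunc.X + RatFunc.C b : RatFunc k) ≠ 0)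
    (h : algebraMap k[X] (RatFunc k) (dickson 1 1 d)
        = (RatFunc.C a * RatFunc.X + RatFunc.C b) ^ d
          * Polynomial.aeval
              (RatFunc.X / (RatFunc.C a * RatFunc.X + RatFunc.C b) : RatFunc k)
              (dickson 1 (1 : k) d)) :
    a = 0 ∧ (b = 1 ∨ b = -1) := by
  -- characteristic facts
  have h2 : (2:k) ≠ 0 := fun h0 =>
    hchar (dvd_trans ((ringChar.spec k 2).mp h0) (dvd_mul_right 2 d))
  have hdk : (d:k) ≠ 0 := fun h0 =>
    hchar (dvd_trans ((ringChar.spec k d).mp h0) (dvd_mul_left d 2))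
  -- the Dickson polynomial over k comes from ℤ
  have hmap : dickson 1 (1:k) d = (dickson 1 (1:ℤ) d).map (Int.castRingHom k) := by
    rw [map_dickson]; norm_num
  have hcoeff : ∀ i, (dickson 1 (1:k) d).coeff i = ((dickson 1 (1:ℤ) d).coeff i : k) := by
    intro i; rw [hmap, coeff_map]; rfl
  have hdZ : (dickson 1 (1:ℤ) d).natDegree = d := by
    have := (dick_monic (d-1)).2
    rwa [show d-1+1 = d by omega] at this
  have hPdeg : (dickson 1 (1:k) d).natDegree < d + 1 := by
    rw [hmap]
    exact lt_of_le_of_lt (le_trans natDegree_map_le hdZ.le) (Nat.lt_succ_self d)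
  -- Step A: polynomial identity
  have hQ : dickson 1 (1:k) d = ∑ i ∈ Finset.range (d+1),
      C ((dickson 1 (1:k) d).coeff i) * ((C a * X + C b) ^ (d - i) * X ^ i) := by
    apply RatFunc.algebraMap_injective k
    set g : RatFunc k := RatFunc.C a * RatFunc.X + RatFunc.C b with hg
    rw [h, aeval_eq_sum_range' hPdeg, Finset.mul_sum]
    simp only [map_sum, map_mul, map_pow, map_add, RatFunc.algebraMap_C,
      RatFunc.algebraMap_X, Algebra.smul_def, RatFunc.algebraMap_eq_C]
    refine Finset.sum_congr rfl fun i hi => ?_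
    have hi' : i ≤ d := by simpa [Nat.lt_succ_iff] using hi
    have hgi : (g : RatFunc k) ^ i ≠ 0 := pow_ne_zero _ hden
    have hc : g ^ i * (RatFunc.X ^ i / g ^ i) = RatFunc.X ^ i := by
      rw [mul_div_assoc', mul_div_cancel_left₀ _ hgi]
    rw [div_pow, ← pow_sub_mul_pow g hi']
    linear_combination (g^(d-i) * RatFunc.C ((dickson 1 (1:k) d).coeff i)) * hc
  -- Step B: coefficient equations
  have E : ∀ j, j ≤ d → (dickson 1 (1:k) d).coeff j
      = b^(d-j) * ∑ i ∈ Finset.range (j+1),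
          (dickson 1 (1:k) d).coeff i * ((d-i).choose (j-i) : k) * a^(j-i) := by
    intro j hj
    conv_lhs => rw [hQ]
    rw [finset_sum_coeff]
    have hterm : ∀ i ∈ Finset.range (d+1),
        (C ((dickson 1 (1:k) d).coeff i) * ((C a * X + C b) ^ (d - i) * X ^ i)).coeff j
        = if i ∈ Finset.range (j+1)
            then (dickson 1 (1:k) d).coeff i * ((d-i).choose (j-i) : k) * a^(j-i) * b^(d-j)
            else 0 := by
      intro i hi
      rw [coeff_C_mul, coeff_mul_X_pow']
      by_cases hij : i ≤ j
      · rw [if_pos hij, linpow, if_pos (Finset.mem_range.mpr (by omega)),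
          show (d-i)-(j-i) = d-j by omega]
        ring
      · rw [if_neg hij, if_neg (by simp [Finset.mem_range]; omega)]
        ring
    rw [Finset.sum_congr rfl hterm, Finset.sum_ite_mem,
      Finset.inter_eq_right.mpr (Finset.range_subset_range.mpr (by omega))]
    rw [Finset.mul_sum]
    exact Finset.sum_congr rfl fun i hi => by ring
  -- the coefficient in degree d-2 equals -d ≠ 0
  have hcdm2 : (dickson 1 (1:k) d).coeff (d-2) = -(d:k) := by
    have h1 := dick_cA (d-2)
    rw [show d-2+2 = d by omega] at h1
    rw [hcoeff, h1]
    push_cast [Nat.cast_sub (by omega : 2 ≤ d)]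
    ring
  have hcdne : (dickson 1 (1:k) d).coeff (d-2) ≠ 0 := by
    rw [hcdm2]; exact neg_ne_zero.mpr hdk
  -- b ≠ 0
  have hb : b ≠ 0 := by
    intro hb0
    have e := E (d-2) (by omega)
    rw [hb0, zero_pow (by omega : d - (d-2) ≠ 0), zero_mul] at e
    exact hcdne e
  -- a = 0
  have ha : a = 0 := by
    rcases hpar with heven | ⟨hodd, hd1⟩
    · obtain ⟨m, hm⟩ := heven
      have hm2 : d = 2*m := by omega
      have hc0 : (dickson 1 (1:k) d).coeff 0 = ((2 * (-1)^m : ℤ) : k) := by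
        rw [hcoeff, hm2, (dick_c0 m).1]
      have hc0ne : (dickson 1 (1:k) d).coeff 0 ≠ 0 := by
        rw [hc0]; push_cast
        exact mul_ne_zero h2 (pow_ne_zero _ (neg_ne_zero.mpr one_ne_zero))
      have hc1 : (dickson 1 (1:k) d).coeff 1 = 0 := by
        rw [hcoeff, hm2, (dick_c1 m).1]; simp
      have e := E 1 (by omega)
      rw [Finset.sum_range_succ, Finset.sum_range_one, hc1] at e
      simp only [Nat.sub_zero, Nat.sub_self, pow_zero, pow_one,
        Nat.choose_one_right, Nat.choose_zero_right, zero_mul, mul_zero,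
        add_zero, mul_one, Nat.cast_zero] at e
      have e2 : b ^ (d-1) * ((dickson 1 (1:k) d).coeff 0 * (d:k) * a) = 0 := by
        rw [← e]
      rcases mul_eq_zero.mp e2 with h' | h'
      · exact absurd h' (pow_ne_zero _ hb)
      · rcases mul_eq_zero.mp h' with h'' | h''
        · rcases mul_eq_zero.mp h'' with h3 | h3
          · exact absurd h3 hc0ne
          · exact absurd h3 hdk
        · exact h''
    · obtain ⟨m, hm⟩ := hodd
      have hd1k : ((d-1:ℕ):k) ≠ 0 := fun h0 => hd1 ((ringChar.spec k (d-1)).mp h0)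
      have hc0 : (dickson 1 (1:k) d).coeff 0 = 0 := by
        rw [hcoeff, hm, (dick_c0 m).2]; simp
      have hc2 : (dickson 1 (1:k) d).coeff 2 = 0 := by
        rw [hcoeff, hm, dick_c2 m]; simp
      have hc1ne : (dickson 1 (1:k) d).coeff 1 ≠ 0 := by
        rw [hcoeff, hm, (dick_c1 m).2]
        push_cast
        refine mul_ne_zero (pow_ne_zero _ (neg_ne_zero.mpr one_ne_zero)) ?_
        have : ((2*m+1 : ℕ) : k) ≠ 0 := by rw [← hm] at *; exact_mod_cast hdk
        push_cast at this
        exact_mod_cast this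
      have e := E 2 (by omega)
      rw [Finset.sum_range_succ, Finset.sum_range_succ, Finset.sum_range_one,
        hc0, hc2] at e
      simp only [Nat.sub_zero, Nat.sub_self, pow_zero, pow_one,
        Nat.choose_one_right, Nat.choose_zero_right, zero_mul, mul_zero,
        add_zero, zero_add, mul_one, Nat.cast_zero] at e
      have e2 : b ^ (d-2) * ((dickson 1 (1:k) d).coeff 1 * ((d-1:ℕ):k) * a) = 0 := by
        rw [show (2:ℕ) - 1 = 1 from rfl, Nat.choose_one_right, pow_one] at e
        rw [← e]
      rcases mul_eq_zero.mp e2 with h' | h'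
      · exact absurd h' (pow_ne_zero _ hb)
      · rcases mul_eq_zero.mp h' with h'' | h''
        · rcases mul_eq_zero.mp h'' with h3 | h3
          · exact absurd h3 hc1ne
          · exact absurd h3 hd1k
        · exact h''
  refine ⟨ha, ?_⟩
  -- with a = 0, compare coefficients in degree d-2
  subst ha
  have e := E (d-2) (by omega)
  have hsum : ∑ i ∈ Finset.range (d-2+1),
      (dickson 1 (1:k) d).coeff i * ((d-i).choose (d-2-i):k) * (0:k)^(d-2-i)
      = (dickson 1 (1:k) d).coeff (d-2) := by
    rw [Finset.sum_eq_single (d-2)]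
    · rw [Nat.sub_self, pow_zero, Nat.choose_zero_right]; simp
    · intro i hi hne
      have : i < d-2 := by
        have := Finset.mem_range.mp hi; omega
      rw [zero_pow (by omega : d-2-i ≠ 0), mul_zero]
    · intro h'
      exact absurd (Finset.mem_range.mpr (by omega)) h'
  rw [hsum, show d-(d-2) = 2 by omega] at e
  have hb2 : b^2 = 1 := by
    apply mul_right_cancel₀ hcdne
    rw [one_mul, ← e]
  rw [pow_two] at hb2
  exact mul_self_eq_one_iff.mp hb2
end

section
/- Let p be a prime, q a power of p with q ≡ 3 (mod 4), and n = (q+1)/4. Let m ≥ 2 be a divisor of n. Let k be an algebraically closed field of characteristic p, assume Y^m − φ_n(X) is irreducible in k(X)[Y], and let K := k(X)[Y]/(Y^m − φ_n(X)) be the function field of the curve y^m = φ_n(x). Then there exists a k-algebra automorphism σ of K of order exactly 3 (explicitly, induced by (x, y) ↦ ((2x+12)/(−x+2), (−4)^t y/(−x+2)^t) where n = t·m). -/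
open Polynomial

/-- The function field `k(X)[Y]/(Y^m - f(X))` of the affine plane curve `y^m = f(x)`. -/
abbrev FunField (k : Type*) [Field k] (m : ℕ) (f : k[X]) :=
  (RatFunc k)[X] ⧸ Ideal.span {(X : (RatFunc k)[X]) ^ m - C (algebraMap k[X] (RatFunc k) f)}

/-!
The Möbius map `μ x = (2x + 12)/(2 - x)` (`mobius`) has order 3: its matrix `[[2, 12], [-1, 2]]`
cubes to `-64`. The factor `w x = -4/(2 - x)` (`mobiusFactor`) satisfies
`w (μ (μ x)) * w (μ x) * w x = 1`. The heart of the matter is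
`φ_n(μ x) (2 - x)^n = (-4)^n φ_n(x)`: after substituting `x = y² + y⁻²` one has
`μ x = s + s⁻¹` with `s = -((y - 1)/(y + 1))²`, and since `4n = q + 1` the Frobenius gives
`(y - 1)^(4n) + (y + 1)^(4n) = 2 (y^(4n) + 1)`, while `(-4)^n = (1 + i)^(q + 1) = 2`.
Hence `(x, y) ↦ (μ x, w(x)^t y)` respects `y^m = φ_n(x)`, and it has order 3 because `μ x ≠ x`.
-/

theorem transcendental_of_forall_ne_algebraMap {k A : Type*} [Field k] [IsAlgClosed k] [Ring A]
    [IsDomain A] [Algebra k A] {a : A} (ha : ∀ c : k, a ≠ algebraMap k A c) :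
    Transcendental k a := by
  intro halg
  have hdeg := IsAlgClosed.degree_eq_one_of_irreducible k (minpoly.irreducible halg.isIntegral)
  obtain ⟨c, hc⟩ := minpoly.natDegree_eq_one_iff.mp (natDegree_eq_of_degree_eq_some hdeg)
  exact ha c hc.symm

theorem exists_algEquiv_orderOf_eq_three_of_algHom {R A : Type*} [CommSemiring R] [Semiring A]
    [Algebra R A] {f : A →ₐ[R] A} (hf3 : f.comp (f.comp f) = AlgHom.id R A)
    (hf1 : f ≠ AlgHom.id R A) :
    ∃ σ : A ≃ₐ[R] A, orderOf σ = 3 := by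
  have : Fact (Nat.Prime 3) := ⟨Nat.prime_three⟩
  refine ⟨AlgEquiv.ofAlgHom f (f.comp f) hf3 (by rw [AlgHom.comp_assoc, hf3]),
    orderOf_eq_prime ?_ ?_⟩
  · ext a
    exact DFunLike.congr_fun hf3 a
  · intro h
    exact hf1 (AlgHom.ext fun a => DFunLike.congr_fun h a)

section CharP

variable {R : Type*} [CommRing R] {p : ℕ} [Fact p.Prime] [CharP R p]

theorem sub_one_pow_add_add_one_pow_char_pow_succ (y : R) (r : ℕ) :
    (y - 1) ^ (p ^ r + 1) + (y + 1) ^ (p ^ r + 1) = 2 * y ^ (p ^ r + 1) + 2 := by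
  rw [pow_succ, pow_succ, pow_succ, sub_pow_char_pow, add_pow_char_pow, one_pow]
  ring

theorem neg_four_pow_eq_two {i : R} (hi : i ^ 2 = -1) {r n : ℕ} (hmod : p ^ r % 4 = 3)
    (hn : 4 * n = p ^ r + 1) : (-4 : R) ^ n = 2 := by
  have hiq : i ^ p ^ r = -i := by
    rw [← Nat.div_add_mod (p ^ r) 4, hmod, pow_add, pow_mul,
      show i ^ 4 = 1 by linear_combination (i ^ 2 - 1) * hi]
    linear_combination i * hi
  calc (-4 : R) ^ n = ((1 + i) ^ 4) ^ n := by
        congr 1; linear_combination (-(i ^ 2) - 4 * i - 5) * hi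
    _ = (1 + i) ^ p ^ r * (1 + i) := by rw [← pow_mul, hn, pow_succ]
    _ = 2 := by rw [add_pow_char_pow, one_pow, hiq]; linear_combination -hi

end CharP

section Mobius

variable {L : Type*} [Field L]

def mobius (z : L) : L := (2 * z + 12) / (2 - z)

def mobiusFactor (z : L) : L := -4 / (2 - z)

@[simp]
theorem map_mobius {L' F : Type*} [Field L'] [FunLike F L L'] [RingHomClass F L L'] (f : F)
    (z : L) : f (mobius z) = mobius (f z) := by
  simp [mobius, map_div₀, map_ofNat f]

@[simp]
theorem map_mobiusFactor {L' F : Type*} [Field L'] [FunLike F L L'] [RingHomClass F L L']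
    (f : F) (z : L) : f (mobiusFactor z) = mobiusFactor (f z) := by
  simp [mobiusFactor, map_div₀, map_ofNat f]

variable {z : L}

theorem mobius_mobius (h2 : (2 : L) ≠ 0) (hz₁ : 2 - z ≠ 0) (hz₂ : z + 2 ≠ 0) :
    mobius (mobius z) = (2 * z - 12) / (z + 2) := by
  have h4 : (4 : L) ≠ 0 := by simpa [show (4 : L) = 2 * 2 by norm_num] using h2
  rw [mobius, mobius, div_eq_div_iff ?_ hz₂]
  · field_simp; ring
  · rw [show (2 : L) - (2 * z + 12) / (2 - z) = -4 * (z + 2) / (2 - z) by field_simp; ring]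
    exact div_ne_zero (mul_ne_zero (neg_ne_zero.mpr h4) hz₂) hz₁

theorem mobius_mobius_mobius (h2 : (2 : L) ≠ 0) (hz₁ : 2 - z ≠ 0) (hz₂ : z + 2 ≠ 0) :
    mobius (mobius (mobius z)) = z := by
  have h16 : (16 : L) ≠ 0 := by simpa [show (16 : L) = 2 ^ 4 by norm_num] using h2
  rw [mobius_mobius h2 hz₁ hz₂, mobius, div_eq_iff]
  · field_simp; ring
  · rw [show (2 : L) - (2 * z - 12) / (z + 2) = 16 / (z + 2) by field_simp; ring]
    exact div_ne_zero h16 hz₂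

theorem mobiusFactor_cocycle (h2 : (2 : L) ≠ 0) (hz₁ : 2 - z ≠ 0) (hz₂ : z + 2 ≠ 0) :
    mobiusFactor (mobius (mobius z)) * mobiusFactor (mobius z) * mobiusFactor z = 1 := by
  have h4 : (4 : L) ≠ 0 := by simpa [show (4 : L) = 2 * 2 by norm_num] using h2
  have h16 : (16 : L) ≠ 0 := by simpa [show (16 : L) = 2 ^ 4 by norm_num] using h2
  rw [mobius_mobius h2 hz₁ hz₂, mobiusFactor, mobiusFactor, mobiusFactor, mobius,
    show (2 : L) - (2 * z - 12) / (z + 2) = 16 / (z + 2) by field_simp; ring,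
    show (2 : L) - (2 * z + 12) / (2 - z) = -4 * (z + 2) / (2 - z) by field_simp; ring]
  field_simp
  ring

end Mobius

theorem eval_mobius_dickson_mul_pow {L : Type*} [Field L] {p : ℕ} [Fact p.Prime] [CharP L p]
    {r n : ℕ} (hn : 4 * n = p ^ r + 1) {y : L} (hy₀ : y ≠ 0) (hy₁ : y - 1 ≠ 0) (hy₂ : y + 1 ≠ 0) :
    eval (mobius (y ^ 2 + (y ^ 2)⁻¹)) (dickson 1 1 n) * (2 - (y ^ 2 + (y ^ 2)⁻¹)) ^ n =
      2 * eval (y ^ 2 + (y ^ 2)⁻¹) (dickson 1 1 n) := by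
  set s : L := -((y - 1) / (y + 1)) ^ 2
  have hs : s ≠ 0 := by simp [s, hy₁, hy₂]
  have hmob : mobius (y ^ 2 + (y ^ 2)⁻¹) = s + s⁻¹ := by
    rw [mobius, div_eq_iff]
    · simp only [s]; field_simp; ring
    · rw [show (2 : L) - (y ^ 2 + (y ^ 2)⁻¹) = -((y - 1) * (y + 1) / y) ^ 2 by field_simp; ring]
      simp [hy₀, hy₁, hy₂]
  have hden : 2 - (y ^ 2 + (y ^ 2)⁻¹) = -((y - 1) * (y + 1) / y) ^ 2 := by field_simp; ring
  rw [hmob, dickson_one_one_eval_add_inv _ _ (mul_inv_cancel₀ hs),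
    dickson_one_one_eval_add_inv _ _ (mul_inv_cancel₀ (pow_ne_zero 2 hy₀)), hden]
  calc (s ^ n + s⁻¹ ^ n) * (-((y - 1) * (y + 1) / y) ^ 2) ^ n
      = ((y - 1) ^ 4 / y ^ 2) ^ n + ((y + 1) ^ 4 / y ^ 2) ^ n := by
        rw [add_mul, ← mul_pow, ← mul_pow]; congr 2 <;> simp only [s] <;> field_simp
    _ = ((y - 1) ^ (4 * n) + (y + 1) ^ (4 * n)) / (y ^ 2) ^ n := by
        simp only [div_pow, ← pow_mul, add_div]
    _ = 2 * ((y ^ 2) ^ n + (y ^ 2)⁻¹ ^ n) := by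
        have hy : y ^ (2 * n) ≠ 0 := pow_ne_zero _ hy₀
        rw [hn, sub_one_pow_add_add_one_pow_char_pow_succ, ← hn, inv_pow, ← pow_mul,
          div_eq_iff hy, mul_assoc, add_mul, inv_mul_cancel₀ hy,
          show 4 * n = 2 * n + 2 * n by ring, pow_add]
        ring

namespace AdjoinRoot

variable {S R : Type*} [CommRing S] [CommRing R] [Algebra S R] {m : ℕ} {a : R}

theorem eval₂_twist_root {β : R →ₐ[S] R} {v : R} (h : β a = v ^ m * a) :
    (X ^ m - C a).eval₂ ((ofAlgHom S (X ^ m - C a)).comp β : R →+* AdjoinRoot (X ^ m - C a))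
      (of _ v * root _) = 0 := by
  have hroot := eval₂_root (X ^ m - C a)
  simp only [eval₂_sub, eval₂_X_pow, eval₂_C] at hroot ⊢
  simp only [RingHom.coe_coe, AlgHom.comp_apply, coe_ofAlgHom, h, map_mul, map_pow]
  linear_combination (of (X ^ m - C a) v) ^ m * hroot

/-- The endomorphism `(x, y) ↦ (β x, v y)` of `R[y]/(y^m - a)`. -/
noncomputable def twistAlgHom (β : R →ₐ[S] R) (v : R) (h : β a = v ^ m * a) :
    AdjoinRoot (X ^ m - C a) →ₐ[S] AdjoinRoot (X ^ m - C a) :=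
  liftAlgHom _ ((ofAlgHom S _).comp β) _ (eval₂_twist_root h)

section

variable {β : R →ₐ[S] R} {v : R} (h : β a = v ^ m * a)

@[simp]
theorem twistAlgHom_of (r : R) : twistAlgHom β v h (of _ r) = of _ (β r) := by
  simp [twistAlgHom]

@[simp]
theorem twistAlgHom_root : twistAlgHom β v h (root _) = of _ v * root _ := by
  simp [twistAlgHom]

theorem twistAlgHom_comp_comp_eq_id (hβ : β.comp (β.comp β) = AlgHom.id S R)
    (hv : β (β v) * β v * v = 1) :
    (twistAlgHom β v h).comp ((twistAlgHom β v h).comp (twistAlgHom β v h)) = AlgHom.id S _ := by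
  ext
  · simpa using congr(of (X ^ m - C a) ($hβ _))
  · simp only [AlgHom.comp_apply, twistAlgHom_root, map_mul, twistAlgHom_of, AlgHom.id_apply]
    rw [← mul_assoc, ← mul_assoc, ← map_mul, ← map_mul, hv, map_one, one_mul]

end

theorem exists_algEquiv_orderOf_eq_three [IsDomain R] (hm : m ≠ 0) {β : R →ₐ[S] R} {v : R}
    (h : β a = v ^ m * a) (hβ : β.comp (β.comp β) = AlgHom.id S R)
    (hv : β (β v) * β v * v = 1) (hβ₁ : β ≠ AlgHom.id S R) :
    ∃ σ : AdjoinRoot (X ^ m - C a) ≃ₐ[S] AdjoinRoot (X ^ m - C a), orderOf σ = 3 := by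
  refine exists_algEquiv_orderOf_eq_three_of_algHom (twistAlgHom_comp_comp_eq_id h hβ hv) ?_
  intro hid
  refine hβ₁ (AlgHom.ext fun r => of.injective_of_degree_ne_zero (f := X ^ m - C a) ?_ ?_)
  · rw [degree_X_pow_sub_C (Nat.pos_of_ne_zero hm)]
    exact_mod_cast hm
  · simpa using DFunLike.congr_fun hid (of _ r)

end AdjoinRoot

namespace RatFunc

variable {k L : Type*} [Field k] [Field L] [Algebra k L]

noncomputable def substAlgHom (g : L) (hg : Transcendental k g) : RatFunc k →ₐ[k] L :=
  liftAlgHom (aeval g) (nonZeroDivisors_le_comap_nonZeroDivisors_of_injective _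
    (transcendental_iff_injective.mp hg))

@[simp]
theorem substAlgHom_algebraMap {g : L} (hg : Transcendental k g) (p : k[X]) :
    substAlgHom g hg (algebraMap k[X] (RatFunc k) p) = aeval g p := by
  simpa [substAlgHom] using liftAlgHom_apply_div (aeval g) _ p 1

@[simp]
theorem substAlgHom_X {g : L} (hg : Transcendental k g) : substAlgHom g hg X = g := by
  rw [← algebraMap_X, substAlgHom_algebraMap, aeval_X]

theorem algHom_ext {T : Type*} [Semiring T] [Algebra k T] {φ ψ : RatFunc k →ₐ[k] T}
    (h : φ X = ψ X) : φ = ψ :=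
  IsLocalization.algHom_ext (nonZeroDivisors k[X]) (Polynomial.algHom_ext (by
    simpa [Algebra.algHom, ← algebraMap_X] using h))

theorem X_ne_algebraMap (c : k) : (X : RatFunc k) ≠ algebraMap k _ c :=
  fun h => transcendental_X (h ▸ isAlgebraic_algebraMap c)

theorem transcendental_X_sq_add_inv [IsAlgClosed k] :
    Transcendental k (X ^ 2 + (X ^ 2)⁻¹ : RatFunc k) := by
  refine transcendental_of_forall_ne_algebraMap fun c hc => ?_
  have hc' : (X : RatFunc k) ^ 4 + 1 = algebraMap k _ c * X ^ 2 := by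
    rw [← hc]; field_simp [X_ne_zero]
  have : (Polynomial.X ^ 4 - Polynomial.C c * Polynomial.X ^ 2 + 1 : k[X]) = 0 := by
    refine transcendental_iff.mp transcendental_X _ ?_
    simp only [map_add, map_sub, map_mul, map_pow, aeval_X, aeval_C, map_one]
    linear_combination hc'
  simpa using congr(Polynomial.eval 0 $this)

theorem two_sub_X_ne_zero : (2 - X : RatFunc k) ≠ 0 :=
  fun h => X_ne_algebraMap (2 : k) (by rw [map_ofNat]; linear_combination -h)

theorem X_add_two_ne_zero : (X + 2 : RatFunc k) ≠ 0 :=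
  fun h => X_ne_algebraMap (-2 : k) (by rw [map_neg, map_ofNat]; linear_combination h)

theorem transcendental_mobius_X [IsAlgClosed k] (h2 : (2 : k) ≠ 0) :
    Transcendental k (mobius X : RatFunc k) := by
  refine transcendental_of_forall_ne_algebraMap fun c hc => ?_
  have hc' : 2 * X + 12 = algebraMap k (RatFunc k) c * (2 - X) := by
    rw [← hc, mobius, div_mul_cancel₀ _ two_sub_X_ne_zero]
  have : (2 * Polynomial.X + 12 - Polynomial.C c * (2 - Polynomial.X) : k[X]) = 0 := by
    refine transcendental_iff.mp transcendental_X _ ?_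
    simp only [map_add, map_sub, map_mul, aeval_X, aeval_C, map_ofNat]
    linear_combination hc'
  have h16 : (16 : k) = 0 := by
    have := congr(Polynomial.eval 2 $this)
    norm_num at this
    linear_combination this
  exact h2 (pow_eq_zero_iff (n := 4) (by norm_num) |>.mp (by linear_combination h16))

theorem mobius_X_ne_X : (mobius X : RatFunc k) ≠ X := by
  intro h
  have h' : (X : RatFunc k) ^ 2 + 12 = 0 := by
    rw [mobius, div_eq_iff two_sub_X_ne_zero] at h
    linear_combination h
  refine X_pow_add_C_ne_zero two_pos (12 : k) (transcendental_iff.mp transcendental_X _ ?_)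
  simp only [map_add, map_pow, aeval_X, map_ofNat]
  exact h'

theorem aeval_mobius_X_dickson [IsAlgClosed k] {p r n : ℕ} [Fact p.Prime] [CharP k p]
    (hn : 4 * n = p ^ r + 1) :
    aeval (mobius X : RatFunc k) (dickson 1 1 n : k[X]) * (2 - X) ^ n =
      2 * algebraMap k[X] (RatFunc k) (dickson 1 1 n) := by
  -- pull back along the injective substitution `X ↦ X² + X⁻²`
  apply (substAlgHom _ (transcendental_X_sq_add_inv (k := k)) : RatFunc k →+* RatFunc k).injective
  simp only [RingHom.coe_coe, map_mul, map_pow, map_sub, map_ofNat, ← aeval_algHom_apply,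
    map_mobius, substAlgHom_X, substAlgHom_algebraMap]
  simp only [aeval_def, eval₂_eq_eval_map, map_dickson, map_one]
  exact eval_mobius_dickson_mul_pow hn X_ne_zero
    (fun h => X_ne_algebraMap (1 : k) (by rw [map_one]; linear_combination h))
    (fun h => X_ne_algebraMap (-1 : k) (by rw [map_neg, map_one]; linear_combination h))

theorem two_ne_zero_of_ne_zero (h2 : (2 : k) ≠ 0) : (2 : RatFunc k) ≠ 0 := by
  simpa only [map_ofNat] using (map_ne_zero (algebraMap k (RatFunc k))).mpr h2

noncomputable def mobiusAlgHom [IsAlgClosed k] (h2 : (2 : k) ≠ 0) : RatFunc k →ₐ[k] RatFunc k :=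
  substAlgHom _ (transcendental_mobius_X h2)

variable [IsAlgClosed k] (h2 : (2 : k) ≠ 0)

@[simp]
theorem mobiusAlgHom_X : mobiusAlgHom h2 X = mobius X :=
  substAlgHom_X _

theorem mobiusAlgHom_ne_id : mobiusAlgHom h2 ≠ AlgHom.id k _ :=
  fun h => mobius_X_ne_X (by simpa using DFunLike.congr_fun h X)

theorem mobiusAlgHom_comp_comp :
    (mobiusAlgHom h2).comp ((mobiusAlgHom h2).comp (mobiusAlgHom h2)) = AlgHom.id k _ := by
  refine algHom_ext ?_
  simp only [AlgHom.comp_apply, mobiusAlgHom_X, map_mobius, AlgHom.id_apply]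
  exact mobius_mobius_mobius (two_ne_zero_of_ne_zero h2) two_sub_X_ne_zero X_add_two_ne_zero

theorem mobiusAlgHom_mobiusFactor_cocycle :
    mobiusAlgHom h2 (mobiusAlgHom h2 (mobiusFactor X)) * mobiusAlgHom h2 (mobiusFactor X) *
      mobiusFactor X = 1 := by
  simp only [map_mobiusFactor, map_mobius, mobiusAlgHom_X]
  exact mobiusFactor_cocycle (two_ne_zero_of_ne_zero h2) two_sub_X_ne_zero X_add_two_ne_zero

theorem mobiusAlgHom_algebraMap_dickson {p r n : ℕ} [Fact p.Prime] [CharP k p]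
    (hn : 4 * n = p ^ r + 1) (h42 : (-4 : k) ^ n = 2) :
    mobiusAlgHom h2 (algebraMap k[X] _ (dickson 1 1 n)) =
      mobiusFactor X ^ n * algebraMap k[X] _ (dickson 1 1 n) := by
  have h42' : (-4 : RatFunc k) ^ n = 2 := by
    simpa only [map_pow, map_neg, map_ofNat] using congr(algebraMap k (RatFunc k) $h42)
  rw [mobiusAlgHom, substAlgHom_algebraMap, mobiusFactor, div_pow, h42', div_mul_eq_mul_div,
    eq_div_iff (pow_ne_zero _ two_sub_X_ne_zero), aeval_mobius_X_dickson hn]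

end RatFunc

theorem stmt13_general (p r q n m : ℕ) (hp : p.Prime) (hq : q = p ^ r)
    (hmod : q % 4 = 3) (hn : 4 * n = q + 1) (hm : 2 ≤ m) (hmn : m ∣ n)
    (k : Type*) [Field k] [IsAlgClosed k] [CharP k p] :
    ∃ σ : FunField k m (dickson 1 1 n) ≃ₐ[k] FunField k m (dickson 1 1 n),
      orderOf σ = 3 := by
  have := Fact.mk hp
  subst hq
  have h2 : (2 : k) ≠ 0 := by
    refine Ring.two_ne_zero fun hchar => ?_
    rw [ringChar.eq k p] at hchar
    subst hchar
    rcases r with _ | r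
    · simp at hmod
    · rw [pow_succ] at hmod; omega
  obtain ⟨i, hi⟩ := IsAlgClosed.exists_pow_nat_eq (-1 : k) two_pos
  obtain ⟨t, rfl⟩ := hmn
  have hv := RatFunc.mobiusAlgHom_algebraMap_dickson h2 hn (neg_four_pow_eq_two hi hmod hn)
  rw [pow_mul'] at hv
  refine AdjoinRoot.exists_algEquiv_orderOf_eq_three (by omega) hv
    (RatFunc.mobiusAlgHom_comp_comp h2) ?_ (RatFunc.mobiusAlgHom_ne_id h2)
  rw [map_pow, map_pow, ← mul_pow, ← mul_pow, RatFunc.mobiusAlgHom_mobiusFactor_cocycle, one_pow]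

/-- let `q ≡ 3 (mod 4)` be a power of the prime `p`,
`n = (q+1)/4`, and `m ≥ 2` a divisor of `n`.  Over an algebraically closed
field `k` of characteristic `p`, the function field `K = k(X)[Y]/(Y^m - φ_n(X))`
of the curve `y^m = φ_n(x)` admits a `k`-algebra automorphism of order
exactly 3 (induced by `(x,y) ↦ ((2x+12)/(-x+2), (-4)^t y/(-x+2)^t)`, `n = tm`). -/
theorem stmt13 (p r q n m : ℕ) (hp : p.Prime) (hr : 1 ≤ r) (hq : q = p ^ r)
    (hmod : q % 4 = 3) (hn : 4 * n = q + 1) (hm : 2 ≤ m) (hmn : m ∣ n)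
    (k : Type*) [Field k] [IsAlgClosed k] [CharP k p]
    (hirr : Irreducible ((X : (RatFunc k)[X]) ^ m
        - C (algebraMap k[X] (RatFunc k) (dickson 1 1 n)))) :
    ∃ σ : FunField k m (dickson 1 1 n) ≃ₐ[k] FunField k m (dickson 1 1 n),
      orderOf σ = 3 :=
  stmt13_general p r q n m hp hq hmod hn hm hmn k
end

section
/- Let p be a prime, r ≥ 1, q = p^r with q ≡ 3 (mod 4), and d = (q+1)/4. Then the finite field F_q with q elements is a splitting field over F_p of the d-th Chebyshev polynomial φ_d ∈ F_p[X]; in particular φ_d splits completely into linear factors over F_q, and F_q is generated over F_p by the roots of φ_d. -/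
/-!
Put `q = p ^ r` and `φ = dickson 1 1 d`, so that `φ (t + t⁻¹) = t ^ d + t⁻¹ ^ d`. Over an algebraic
closure of `𝔽_q` every element is `t + t⁻¹`, and it is a root of `φ` iff `t ^ (2 * d) = -1`. Since
`4 * d = q + 1` this forces `t ^ q = t⁻¹`, so `(t + t⁻¹) ^ q = t + t⁻¹` lies in `𝔽_q`: hence `φ` splits
over `𝔽_q`.

For a primitive `(q + 1)`-st root of unity `ζ`, `y = ζ + ζ⁻¹` is a root of `φ`. If `y ^ p ^ s = y`,
the `s`-th power of Frobenius maps `ζ` to a root of `X ^ 2 - y X + 1`, i.e. to `ζ` or `ζ⁻¹`, so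
`ζ ^ p ^ (2 * s) = ζ` and `q + 1 ∣ p ^ (2 * s) - 1`. For a proper divisor `s` of `r` this is
impossible by size, so `y` alone generates `𝔽_q` over `𝔽_p`.
-/

open Polynomial IntermediateField

theorem dickson_one_one_ne_zero {R : Type*} [CommRing R] (h2 : (2 : R) ≠ 0) (n : ℕ) :
    dickson 1 (1 : R) n ≠ 0 := by
  intro h
  have h2' := dickson_one_one_eval_add_inv (1 : R) 1 (mul_one 1) n
  rw [h, eval_zero, one_pow, one_add_one_eq_two] at h2'
  exact h2 h2'.symm

section Field

variable {K : Type*} [Field K]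

theorem dickson_one_one_eval_add_inv_eq_zero_iff {t : K} (ht : t ≠ 0) (n : ℕ) :
    (dickson 1 (1 : K) n).eval (t + t⁻¹) = 0 ↔ t ^ (2 * n) = -1 := by
  rw [dickson_one_one_eval_add_inv t t⁻¹ (mul_inv_cancel₀ ht),
    ← mul_eq_zero_iff_left (pow_ne_zero n ht), mul_add, ← mul_pow t t⁻¹, mul_inv_cancel₀ ht,
    one_pow, ← pow_add, ← two_mul, eq_neg_iff_add_eq_zero]

theorem eq_or_eq_inv_of_add_inv_eq_add_inv {u t : K} (hu : u ≠ 0) (ht : t ≠ 0)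
    (h : u + u⁻¹ = t + t⁻¹) : u = t ∨ u = t⁻¹ := by
  have hfactor : (u - t) * (u - t⁻¹) = 0 := by
    field_simp at h ⊢
    linear_combination h
  rcases mul_eq_zero.1 hfactor with h | h
  · exact .inl (sub_eq_zero.1 h)
  · exact .inr (sub_eq_zero.1 h)

theorem IsAlgClosed.exists_add_inv_eq [IsAlgClosed K] (x : K) :
    ∃ t : K, t ≠ 0 ∧ t + t⁻¹ = x := by
  obtain ⟨t, ht⟩ := IsAlgClosed.exists_root (X ^ 2 - C x * X + 1 : K[X]) (by
    rw [show (X ^ 2 - C x * X + 1 : K[X]).degree = 2 by compute_degree!]; decide)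
  have ht : t ^ 2 - x * t + 1 = 0 := by simpa using ht
  have ht0 : t ≠ 0 := by rintro rfl; simp at ht
  refine ⟨t, ht0, ?_⟩
  field_simp
  linear_combination ht

variable (p : ℕ) [ExpChar K p]

theorem add_inv_pow_char_pow_eq_self {t : K} {n : ℕ} (h : t ^ (p ^ n + 1) = 1) :
    (t + t⁻¹) ^ p ^ n = t + t⁻¹ := by
  have ht : t ^ p ^ n = t⁻¹ := eq_inv_of_mul_eq_one_left (by rwa [← pow_succ])
  rw [add_pow_expChar_pow, inv_pow, ht, inv_inv, add_comm]

theorem pow_char_pow_two_mul_eq_self {ζ : K} (hζ : ζ ≠ 0) {s : ℕ}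
    (h : (ζ + ζ⁻¹) ^ p ^ s = ζ + ζ⁻¹) : ζ ^ p ^ (2 * s) = ζ := by
  rw [add_pow_expChar_pow, inv_pow] at h
  rw [two_mul, pow_add, pow_mul]
  rcases eq_or_eq_inv_of_add_inv_eq_add_inv (pow_ne_zero _ hζ) hζ h with hσ | hσ <;> simp [hσ]

end Field

theorem Nat.eq_of_dvd_of_pow_add_one_dvd_pow_two_mul_sub_one {p r s : ℕ} (hp : 1 < p)
    (hr : r ≠ 0) (hsr : s ∣ r) (h : p ^ r + 1 ∣ p ^ (2 * s) - 1) : s = r := by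
  obtain ⟨m, rfl⟩ := hsr
  have hs : s ≠ 0 := left_ne_zero_of_mul hr
  obtain hm | hm : m ≤ 1 ∨ 2 ≤ m := by omega
  · interval_cases m <;> simp_all
  have h1 : p ^ 2 ≤ p ^ (2 * s) := Nat.pow_le_pow_right (by omega) (by omega)
  have h2 : p ^ (2 * s) ≤ p ^ (s * m) := Nat.pow_le_pow_right (by omega) (by nlinarith)
  have h3 : 2 ^ 2 ≤ p ^ 2 := Nat.pow_le_pow_left hp 2
  have := Nat.le_of_dvd (by omega) h
  omega

namespace FiniteField

theorem mem_range_algebraMap_of_pow_card_eq_self {E L : Type*} [Field E] [Fintype E]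
    [Field L] [Algebra E L] {x : L} (hx : x ^ Fintype.card E = x) :
    x ∈ (algebraMap E L).range := by
  have hsplit : (X ^ Fintype.card E - X : E[X]).Splits := by
    rw [splits_iff_card_roots, roots_X_pow_card_sub_X,
      X_pow_card_sub_X_natDegree_eq E Fintype.one_lt_card]
    rfl
  refine hsplit.mem_range_of_isRoot (X_pow_card_sub_X_ne_zero E Fintype.one_lt_card) ?_
  simp [hx]

theorem adjoin_simple_eq_top_of_forall_pow_eq_self (p : ℕ) [Fact p.Prime] {E : Type*} [Field E]
    [Finite E] [Algebra (ZMod p) E] (y : E)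
    (h : ∀ s, s ∣ Module.finrank (ZMod p) E → y ^ p ^ s = y → s = Module.finrank (ZMod p) E) :
    (ZMod p)⟮y⟯ = ⊤ := by
  have : Fintype (ZMod p)⟮y⟯ := Fintype.ofFinite _
  set s := Module.finrank (ZMod p) (ZMod p)⟮y⟯
  have hcard : Fintype.card (ZMod p)⟮y⟯ = p ^ s := by
    rw [Module.card_eq_pow_finrank (K := ZMod p), ZMod.card]
  have hy : y ^ p ^ s = y := by
    simpa [hcard] using
      congrArg (algebraMap (ZMod p)⟮y⟯ E) (pow_card (AdjoinSimple.gen (ZMod p) y))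
  have hs := h s ⟨_, (Module.finrank_mul_finrank (ZMod p) (ZMod p)⟮y⟯ E).symm⟩ hy
  exact eq_of_le_of_finrank_eq le_top (hs.trans finrank_top'.symm)

end FiniteField

section Chebyshev

variable {E : Type*} [Field E] [Fintype E] {d : ℕ}

theorem splits_dickson_one_one_of_four_mul_eq_card_add_one
    (hd : 4 * d = Fintype.card E + 1) : (dickson 1 (1 : E) d).Splits := by
  obtain ⟨n, hp, hcard⟩ := FiniteField.card E (ringChar E)
  have : Fact (ringChar E).Prime := ⟨hp⟩
  let L := AlgebraicClosure E
  refine Splits.of_splits_map (algebraMap E L) (IsAlgClosed.splits _) fun x hx => ?_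
  obtain ⟨t, ht, rfl⟩ := IsAlgClosed.exists_add_inv_eq x
  have ht2d : t ^ (2 * d) = -1 := by
    rw [← dickson_one_one_eval_add_inv_eq_zero_iff ht, ← map_one (algebraMap E L), ← map_dickson]
    exact (mem_roots'.1 hx).2
  have htq : t ^ (ringChar E ^ (n : ℕ) + 1) = 1 := by
    rw [← hcard, ← hd, show 4 * d = 2 * d * 2 by ring, pow_mul, ht2d, neg_one_sq]
  apply FiniteField.mem_range_algebraMap_of_pow_card_eq_self
  rw [hcard]
  exact add_inv_pow_char_pow_eq_self (ringChar E) htq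

theorem exists_mem_rootSet_dickson_adjoin_eq_top (p : ℕ) [Fact p.Prime] [Algebra (ZMod p) E]
    (hd : 4 * d = Fintype.card E + 1) :
    ∃ y ∈ (dickson 1 (1 : ZMod p) d).rootSet E, (ZMod p)⟮y⟯ = ⊤ := by
  have hp : p.Prime := Fact.out
  set r := Module.finrank (ZMod p) E
  have hcard : Fintype.card E = p ^ r := by
    rw [Module.card_eq_pow_finrank (K := ZMod p), ZMod.card]
  have : CharP E p := charP_of_injective_algebraMap (algebraMap (ZMod p) E).injective p
  let L := AlgebraicClosure E
  have : NeZero ((Fintype.card E + 1 : ℕ) : E) := ⟨by simp⟩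
  obtain ⟨ζ, hζ⟩ := HasEnoughRootsOfUnity.exists_primitiveRoot L (Fintype.card E + 1)
  have hζ0 : ζ ≠ 0 := hζ.ne_zero (by omega)
  have hζ2d : ζ ^ (2 * d) = -1 := by
    have hsq : ζ ^ (2 * d) * ζ ^ (2 * d) = 1 := by
      rw [← pow_add, show 2 * d + 2 * d = Fintype.card E + 1 by omega, hζ.pow_eq_one]
    exact (mul_self_eq_one_iff.1 hsq).resolve_left
      (hζ.pow_ne_one_of_pos_of_lt (by omega) (by omega))
  obtain ⟨y, hy⟩ := FiniteField.mem_range_algebraMap_of_pow_card_eq_self (x := ζ + ζ⁻¹)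
    (by rw [hcard]; exact add_inv_pow_char_pow_eq_self p (hcard ▸ hζ.pow_eq_one))
  refine ⟨y, mem_rootSet'.2 ⟨?_, ?_⟩, ?_⟩
  · have h2 : (2 : E) * (2 * d) = 1 := by
      have h := congrArg (Nat.cast : ℕ → E) hd
      push_cast [Nat.cast_card_eq_zero] at h
      linear_combination h
    rw [map_dickson, map_one]
    exact dickson_one_one_ne_zero (left_ne_zero_of_mul_eq_one h2) d
  · apply (algebraMap E L).injective
    rw [map_zero, ← aeval_algebraMap_apply, hy, aeval_def, eval₂_eq_eval_map, map_dickson,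
      map_one, dickson_one_one_eval_add_inv_eq_zero_iff hζ0]
    exact hζ2d
  · refine FiniteField.adjoin_simple_eq_top_of_forall_pow_eq_self p y fun s hs hys => ?_
    have hζs := pow_char_pow_two_mul_eq_self p hζ0 (by rw [← hy, ← map_pow, hys])
    have hdvd : Fintype.card E + 1 ∣ p ^ (2 * s) - 1 := hζ.dvd_of_pow_eq_one _ (by
      rw [pow_sub₀ _ hζ0 (Nat.one_le_pow _ _ hp.pos), hζs, pow_one, mul_inv_cancel₀ hζ0])
    exact Nat.eq_of_dvd_of_pow_add_one_dvd_pow_two_mul_sub_one hp.one_lt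
      Module.finrank_pos.ne' hs (hcard ▸ hdvd)

end Chebyshev

theorem stmt15_general (p r q d : ℕ) [Fact p.Prime] (hq : q = p ^ r)
    (hd : 4 * d = q + 1) :
    Polynomial.IsSplittingField (ZMod p) (GaloisField p r)
      (Polynomial.dickson 1 (1 : ZMod p) d) := by
  have hr : r ≠ 0 := by rintro rfl; rw [pow_zero] at hq; omega
  let : Fintype (GaloisField p r) := Fintype.ofFinite _
  have hd' : 4 * d = Fintype.card (GaloisField p r) + 1 := by
    rw [← Nat.card_eq_fintype_card, GaloisField.card p r hr, ← hq, hd]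
  obtain ⟨y, hy, hgen⟩ := exists_mem_rootSet_dickson_adjoin_eq_top p hd'
  refine isSplittingField_iff_intermediateField.2 ⟨?_, ?_⟩
  · rw [map_dickson, map_one]
    exact splits_dickson_one_one_of_four_mul_eq_card_add_one hd'
  · rw [eq_top_iff, ← hgen, adjoin_simple_le_iff]
    exact subset_adjoin _ _ hy

/-- let `p` be prime, `q = p^r ≡ 3 (mod 4)` and `d = (q+1)/4`.
Then `F_q = GaloisField p r` is a splitting field over `F_p = ZMod p` of the
`d`-th Chebyshev polynomial `φ_d`: it splits completely into linear factors
over `F_q`, and `F_q` is generated over `F_p` by its roots. -/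
theorem stmt15 (p r q d : ℕ) [Fact p.Prime] (hr : 1 ≤ r) (hq : q = p ^ r)
    (hmod : q % 4 = 3) (hd : 4 * d = q + 1) :
    Polynomial.IsSplittingField (ZMod p) (GaloisField p r)
      (Polynomial.dickson 1 (1 : ZMod p) d) :=
  stmt15_general p r q d hq hd
end

section
/- Let k be a field and d ≥ 1 an integer such that char(k) does not divide 2d. Then the d-th Chebyshev polynomial φ_d, regarded as an element of k[X], is separable (i.e., coprime to its derivative, having d distinct roots in an algebraic closure of k). -/
/-!
Over an algebraically closed field `K` in which `2n ≠ 0`, the polynomial `X ^ (2n) + 1` has `2n`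
distinct roots `s`, all nonzero. Since `φ_n (s + s⁻¹) = s ^ n + s⁻ⁿ` and `s ^ (2n) = -1`, each
`s + s⁻¹` is a root of `φ_n`; and `s + s⁻¹ = t + t⁻¹` forces `t ∈ {s, s⁻¹}`, so this gives at
least `n` distinct roots of `φ_n`, a nonzero polynomial of degree at most `n`. Hence all roots of
`φ_n` are simple. A general field is handled by passing to its algebraic closure.
-/

open Polynomial

theorem eq_or_eq_inv_of_add_inv_eq_add_inv_s17 {K : Type*} [Field K] {s t : K} (hs : s ≠ 0)
    (ht : t ≠ 0) (h : s + s⁻¹ = t + t⁻¹) : t = s ∨ t = s⁻¹ := by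
  have key : (s - t) * (s * t - 1) = 0 := by
    linear_combination (s * t) * h - t * mul_inv_cancel₀ hs + s * mul_inv_cancel₀ ht
  rcases mul_eq_zero.mp key with h' | h'
  · exact .inl (sub_eq_zero.mp h').symm
  · exact .inr (eq_inv_of_mul_eq_one_right (sub_eq_zero.mp h'))

theorem Finset.card_le_two_mul_card_image_add_inv {K : Type*} [Field K] [DecidableEq K]
    (T : Finset K) (hT : 0 ∉ T) : T.card ≤ 2 * (T.image fun s ↦ s + s⁻¹).card := by
  refine T.card_le_mul_card_image 2 fun a _ ↦ ?_
  rcases (T.filter fun s ↦ s + s⁻¹ = a).eq_empty_or_nonempty with hempty | ⟨s, hs⟩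
  · simp [hempty]
  rw [Finset.mem_filter] at hs
  calc (T.filter fun s ↦ s + s⁻¹ = a).card ≤ ({s, s⁻¹} : Finset K).card := by
        refine Finset.card_le_card fun t ht ↦ ?_
        rw [Finset.mem_filter] at ht
        have hne : ∀ {x}, x ∈ T → x ≠ 0 := fun hx h ↦ hT (h ▸ hx)
        simpa using eq_or_eq_inv_of_add_inv_eq_add_inv_s17 (hne hs.1) (hne ht.1) (hs.2.trans ht.2.symm)
    _ ≤ 2 := Finset.card_le_two

namespace Polynomial

theorem natDegree_dickson_one_one_le (R : Type*) [CommRing R] :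
    ∀ n : ℕ, (dickson 1 (1 : R) n).natDegree ≤ n
  | 0 => by norm_num [dickson_zero]
  | 1 => by simpa [dickson_one] using natDegree_X_le
  | n + 2 => by
    rw [dickson_add_two, map_one, one_mul]
    refine (natDegree_sub_le _ _).trans (max_le ?_ ?_)
    · exact (natDegree_mul_le_of_le natDegree_X_le (natDegree_dickson_one_one_le R (n + 1))).trans
        (by omega)
    · exact (natDegree_dickson_one_one_le R n).trans (by omega)

theorem dickson_one_one_eval_two {R : Type*} [CommRing R] (n : ℕ) :
    (dickson 1 (1 : R) n).eval 2 = 2 := by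
  simpa [one_add_one_eq_two] using dickson_one_one_eval_add_inv (1 : R) 1 (mul_one 1) n

theorem dickson_one_one_ne_zero {R : Type*} [CommRing R] [NeZero (2 : R)] (n : ℕ) :
    dickson 1 (1 : R) n ≠ 0 := by
  intro h
  have h2 := dickson_one_one_eval_two (R := R) n
  rw [h, eval_zero] at h2
  exact two_ne_zero h2.symm

theorem dickson_one_one_isRoot_add_inv {K : Type*} [Field K] {s : K} {n : ℕ} (hs₀ : s ≠ 0)
    (hs : s ^ (2 * n) = -1) : (dickson 1 (1 : K) n).IsRoot (s + s⁻¹) := by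
  have hsn : s ^ n * s ^ n = -1 := by rw [← pow_add, ← two_mul, hs]
  rw [IsRoot.def, dickson_one_one_eval_add_inv s s⁻¹ (mul_inv_cancel₀ hs₀), inv_pow,
    inv_eq_of_mul_eq_one_right (by rw [mul_neg, hsn, neg_neg] : s ^ n * -s ^ n = 1), add_neg_cancel]

theorem card_nthRootsFinset_of_isAlgClosed {K : Type*} [Field K] [IsAlgClosed K]
    {n : ℕ} (hn : (n : K) ≠ 0) {a : K} (ha : a ≠ 0) : (nthRootsFinset n a).card = n := by
  classical
  have hsep : (X ^ n - C a).Separable := separable_X_pow_sub_C a hn ha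
  rw [nthRootsFinset_def, nthRoots, Multiset.toFinset_card_of_nodup (nodup_roots hsep),
    ← (IsAlgClosed.splits _).natDegree_eq_card_roots, natDegree_X_pow_sub_C]

theorem separable_dickson_one_one_of_isAlgClosed {K : Type*} [Field K] [IsAlgClosed K] {n : ℕ}
    (h2n : ((2 * n : ℕ) : K) ≠ 0) : (dickson 1 (1 : K) n).Separable := by
  classical
  have : NeZero (2 : K) := ⟨by rw [Nat.cast_mul] at h2n; exact_mod_cast left_ne_zero_of_mul h2n⟩
  have hpos : 0 < 2 * n := Nat.pos_of_ne_zero fun h ↦ h2n (by simp [h])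
  set T := nthRootsFinset (2 * n) (-1 : K)
  have hT₀ : (0 : K) ∉ T := by simp [T, mem_nthRootsFinset hpos, hpos.ne']
  set S := T.image fun s ↦ s + s⁻¹
  have hS : ∀ x ∈ S, (dickson 1 (1 : K) n).eval x = 0 := by
    simp only [S, Finset.mem_image]
    rintro _ ⟨s, hs, rfl⟩
    exact dickson_one_one_isRoot_add_inv (ne_of_mem_of_not_mem hs hT₀)
      ((mem_nthRootsFinset hpos _).mp hs)
  have hcard : (dickson 1 (1 : K) n).natDegree ≤ S.card := by
    have : T.card ≤ 2 * S.card := T.card_le_two_mul_card_image_add_inv hT₀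
    rw [card_nthRootsFinset_of_isAlgClosed h2n (neg_ne_zero.mpr one_ne_zero)] at this
    exact (natDegree_dickson_one_one_le K n).trans (by omega)
  have hroots := roots_eq_of_natDegree_le_card_of_ne_zero hS hcard (dickson_one_one_ne_zero n)
  rw [← nodup_roots_iff_of_splits (dickson_one_one_ne_zero n) (IsAlgClosed.splits _), hroots]
  exact S.nodup

end Polynomial

theorem stmt17_general (k : Type*) [Field k] (d : ℕ)
    (hchar : ¬ (ringChar k ∣ 2 * d)) :
    (Polynomial.dickson 1 (1 : k) d).Separable := by
  have h2d : ((2 * d : ℕ) : k) ≠ 0 := fun h ↦ hchar ((ringChar.spec k (2 * d)).mp h)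
  rw [← separable_map (algebraMap k (AlgebraicClosure k)), map_dickson, map_one]
  exact separable_dickson_one_one_of_isAlgClosed
    (map_natCast (algebraMap k (AlgebraicClosure k)) _ ▸ (_root_.map_ne_zero _).mpr h2d)

/-- over a field `k` with `char k ∤ 2d` (and `d ≥ 1`), the `d`-th
Chebyshev polynomial `φ_d = dickson 1 1 d ∈ k[X]` is separable. -/
theorem stmt17 (k : Type*) [Field k] (d : ℕ) (hd : 1 ≤ d)
    (hchar : ¬ (ringChar k ∣ 2 * d)) :
    (Polynomial.dickson 1 (1 : k) d).Separable :=
  stmt17_general k d hchar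
end

section
/- Let k be a field and d ≥ 3 an integer with char(k) ∤ 2d. Then there do not exist a, b, e ∈ k such that φ_d(X) = (aX + b)^d − e in k[X], where φ_d is the d-th Chebyshev polynomial. -/
open Polynomial

private lemma dickson_natDegree_le (k : Type*) [CommRing k] :
    ∀ n : ℕ, (dickson 1 (1 : k) n).natDegree ≤ n
  | 0 => by rw [dickson_zero]; compute_degree
  | 1 => by rw [dickson_one]; exact natDegree_X_le
  | n + 2 => by
    rw [dickson_add_two]
    refine le_trans (natDegree_sub_le _ _) (max_le ?_ ?_)
    · calc (X * dickson 1 (1 : k) (n + 1)).natDegree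
          ≤ (X : k[X]).natDegree + (dickson 1 (1 : k) (n + 1)).natDegree := natDegree_mul_le
        _ ≤ 1 + (n + 1) := by
            have := dickson_natDegree_le k (n + 1)
            have hx : (X : k[X]).natDegree ≤ 1 := natDegree_X_le
            omega
        _ = n + 2 := by omega
    · simp only [map_one, one_mul]
      exact le_trans (dickson_natDegree_le k n) (by omega)

private lemma dickson_coeffs (k : Type*) [CommRing k] :
    ∀ n : ℕ, (dickson 1 (1 : k) (n + 2)).coeff (n + 2) = 1 ∧
      (dickson 1 (1 : k) (n + 2)).coeff (n + 1) = 0 ∧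
      (dickson 1 (1 : k) (n + 2)).coeff n = -((n : k) + 2)
  | 0 => by
    rw [dickson_two]
    norm_num
  | 1 => by
    have h3 : dickson 1 (1 : k) 3 = X ^ 3 - C 3 * X := by
      rw [show (3 : ℕ) = 1 + 2 from rfl, dickson_add_two, dickson_two, dickson_one]
      simp only [map_one, one_mul, map_ofNat]
      ring
    rw [show (1 + 2 : ℕ) = 3 from rfl, h3]
    simp [coeff_X_pow, coeff_C_mul, coeff_X]
    norm_num
  | n + 2 => by
    obtain ⟨h1, h2, h3⟩ := dickson_coeffs k n
    obtain ⟨g1, g2, g3⟩ := dickson_coeffs k (n + 1)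
    have hdeg : ∀ m j : ℕ, m < j → (dickson 1 (1 : k) m).coeff j = 0 := fun m j h =>
      coeff_eq_zero_of_natDegree_lt (lt_of_le_of_lt (dickson_natDegree_le k m) h)
    rw [show n + 2 + 2 = (n + 3) + 1 by ring] at *
    rw [dickson_add_two]
    refine ⟨?_, ?_, ?_⟩
    · rw [coeff_sub, coeff_X_mul]
      rw [show n + 3 = (n + 1) + 2 by ring] at g1 ⊢
      rw [g1, map_one, one_mul, hdeg (n + 2) (n + 1 + 2 + 1) (by omega), sub_zero]
    · rw [coeff_sub, show n + 3 = (n + 2) + 1 by ring, coeff_X_mul]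
      rw [show (n + 2) + 1 = (n + 1) + 2 by ring] at g2
      rw [show n + 2 + 1 = n + 1 + 2 by ring, g2, map_one, one_mul,
        hdeg (n + 2) (n + 2 + 1) (by omega), sub_zero]
    · rw [coeff_sub, show n + 2 = (n + 1) + 1 by ring, coeff_X_mul]
      rw [show (n + 1) + 1 = n + 2 by ring] at *
      rw [g3, map_one, one_mul, h1]
      push_cast
      ring

/-- for `d ≥ 3` and `char k ∤ 2d`, the `d`-th Chebyshev
polynomial is not of the form `(aX + b)^d - e`. -/
theorem stmt18 (k : Type*) [Field k] (d : ℕ) (hd : 3 ≤ d)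
    (hchar : ¬ (ringChar k ∣ 2 * d)) :
    ¬ ∃ a b e : k, dickson 1 (1 : k) d = (C a * X + C b) ^ d - C e := by
  rintro ⟨a, b, e, h⟩
  have hdk : (d : k) ≠ 0 := by
    intro h0
    exact hchar ((ringChar.spec k d).mp h0 |>.mul_left 2)
  obtain ⟨n, rfl⟩ : ∃ n, d = n + 2 := ⟨d - 2, by omega⟩
  have hd2 : ((n : k) + 2) ≠ 0 := by push_cast at hdk; exact hdk
  obtain ⟨c1, c2, c3⟩ := dickson_coeffs k n
  have ha : a ≠ 0 := by
    intro ha0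
    subst ha0
    rw [h] at c1
    simp only [map_zero, zero_mul, zero_add, ← C_pow, coeff_sub, coeff_C] at c1
    norm_num at c1
  have hform : C a * X + C b = C a * (X + C (b / a)) := by
    rw [mul_add, ← C_mul, mul_div_cancel₀ _ ha]
  rw [hform, mul_pow, ← C_pow] at h
  set c := b / a with hc
  have coeffRHS : ∀ j : ℕ, ((C (a ^ (n + 2)) * (X + C c) ^ (n + 2) - C e).coeff j)
      = a ^ (n + 2) * (c ^ (n + 2 - j) * ((n + 2).choose j : k)) - (C e).coeff j := by
    intro j
    rw [coeff_sub, coeff_C_mul, coeff_X_add_C_pow]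
  have e2 : a ^ (n + 2) * (c * ((n : k) + 2)) = 0 := by
    have := c2
    rw [h, coeffRHS (n + 1)] at this
    have hch : ((n + 2).choose (n + 1) : k) = ((n + 2 : ℕ) : k) := by
      rw [show n + 2 = (n + 1) + 1 by rfl, Nat.choose_succ_self_right]
    rw [show n + 2 - (n + 1) = 1 by omega, pow_one, hch, coeff_C, if_neg (by omega),
      sub_zero] at this
    push_cast at this
    linear_combination this
  have hcz : c = 0 := by
    rcases mul_eq_zero.mp e2 with h' | h'
    · exact absurd h' (pow_ne_zero _ ha)
    · rcases mul_eq_zero.mp h' with h'' | h''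
      · exact h''
      · exact absurd h'' hd2
  have e3 : -((n : k) + 2) = 0 := by
    have := c3
    rw [h, coeffRHS n, show n + 2 - n = 2 by omega, hcz, coeff_C, if_neg (by omega)] at this
    rw [← this]
    simp
  exact hd2 (neg_eq_zero.mp e3)
end
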